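/- Let c ∈ ℝ. (i) If X₁ : (0,∞) → ℝ is three times continuously differentiable and satisfies x X₁'''(x) − X₁''(x) + (x + 9/(4x)) X₁'(x) − X₁(x) = c x² on (0,∞), then the function G^{X₁}(x) := (X₁''(x))² + 4c X₁(x) + (1 + 9/(4x²)) (X₁'(x))² + ((2/x)(−X₁''(x) − X₁(x) + c x²) − 4c x) X₁'(x) is constant on (0,∞). (ii) If Y : ℝ → ℝ is twice continuously differentiable and satisfies Y''(y) + Y(y) = c y² on ℝ, then the function H^{Y}(y) := (Y'(y) − 2c y)² + (Y(y) − c y² + 2c)² − 4c² is constant on ℝ. -/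

import Mathlib

open Real Set

/-- If a function has zero derivative on `(0,∞)`, it is constant there. -/
lemma const_of_deriv_zero_Ioi {g : ℝ → ℝ}
    (h : ∀ x ∈ Set.Ioi (0 : ℝ), HasDerivAt g 0 x) :
    ∃ K : ℝ, ∀ x ∈ Set.Ioi (0 : ℝ), g x = K := by
  refine ⟨g 1, fun x hx => ?_⟩
  apply (convex_Ioi (0 : ℝ)).is_const_of_fderivWithin_eq_zero (𝕜 := ℝ)
    (fun y hy => ((h y hy).differentiableAt).differentiableWithinAt)
    (fun y hy => ?_) hx (by norm_num : (1:ℝ) ∈ Set.Ioi (0:ℝ))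
  rw [fderivWithin_of_isOpen isOpen_Ioi hy, (h y hy).hasFDerivAt.fderiv]
  ext
  simp

/-- (i) If `X₁` is three times continuously differentiable on `(0,∞)` and
satisfies `x X₁''' − X₁'' + (x + 9/(4x)) X₁' − X₁ = c x²` there, then
`G^{X₁}(x) := (X₁'')² + 4c X₁ + (1 + 9/(4x²)) (X₁')² + ((2/x)(−X₁'' − X₁ + c x²) − 4cx) X₁'`
is constant on `(0,∞)`.
(ii) If `Y` is twice continuously differentiable on `ℝ` and satisfies `Y'' + Y = c y²`, then
`H^{Y}(y) := (Y' − 2cy)² + (Y − cy² + 2c)² − 4c²` is constant on `ℝ`. -/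
theorem stmt3 (c : ℝ)
    (X1 X1' X1'' X1''' : ℝ → ℝ)
    (hX1 : ∀ x ∈ Set.Ioi (0 : ℝ), HasDerivAt X1 (X1' x) x)
    (hX1' : ∀ x ∈ Set.Ioi (0 : ℝ), HasDerivAt X1' (X1'' x) x)
    (hX1'' : ∀ x ∈ Set.Ioi (0 : ℝ), HasDerivAt X1'' (X1''' x) x)
    (hX1cont : ContinuousOn X1''' (Set.Ioi (0 : ℝ)))
    (hODE : ∀ x ∈ Set.Ioi (0 : ℝ),
      x * X1''' x - X1'' x + (x + 9 / (4 * x)) * X1' x - X1 x = c * x ^ 2)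
    (Y Y' Y'' : ℝ → ℝ)
    (hY : ∀ y : ℝ, HasDerivAt Y (Y' y) y)
    (hY' : ∀ y : ℝ, HasDerivAt Y' (Y'' y) y)
    (hYcont : Continuous Y'')
    (hYODE : ∀ y : ℝ, Y'' y + Y y = c * y ^ 2) :
    (∃ K : ℝ, ∀ x ∈ Set.Ioi (0 : ℝ),
      (X1'' x) ^ 2 + 4 * c * X1 x + (1 + 9 / (4 * x ^ 2)) * (X1' x) ^ 2
        + ((2 / x) * (-(X1'' x) - X1 x + c * x ^ 2) - 4 * c * x) * X1' x = K) ∧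
    (∃ K : ℝ, ∀ y : ℝ,
      (Y' y - 2 * c * y) ^ 2 + (Y y - c * y ^ 2 + 2 * c) ^ 2 - 4 * c ^ 2 = K) := by
  constructor
  · apply const_of_deriv_zero_Ioi
    intro x hx
    have hxpos : (0:ℝ) < x := hx
    have hne : x ≠ 0 := ne_of_gt hxpos
    have h := hODE x hx
    have hX3 : X1''' x = (c * x ^ 2 + X1'' x - (x + 9 / (4 * x)) * X1' x + X1 x) / x := by
      rw [eq_div_iff hne]; linear_combination h
    have h4x2 : (4 : ℝ) * x ^ 2 ≠ 0 := by positivity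
    have H :=
      ((((hX1'' x hx).pow 2).add ((hX1 x hx).const_mul (4 * c))).add
        (((hasDerivAt_const x (1:ℝ)).add
            ((hasDerivAt_const x (9:ℝ)).div ((hasDerivAt_pow 2 x).const_mul 4) h4x2)).mul
          ((hX1' x hx).pow 2))).add
        (((((hasDerivAt_const x (2:ℝ)).div (hasDerivAt_id' x) hne).mul
            (((hX1'' x hx).neg.sub (hX1 x hx)).add ((hasDerivAt_pow 2 x).const_mul c))).sub
          ((hasDerivAt_id' x).const_mul (4 * c))).mul (hX1' x hx))
    convert H using 1
    case e'_4 => rfl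
    case e'_5 => rfl
    case e'_8 => rfl
    rw [hX3]
    simp only [Pi.add_apply, Pi.sub_apply, Pi.mul_apply, Pi.div_apply, Pi.neg_apply, Pi.pow_apply]
    field_simp
    ring
  · have H : ∀ y : ℝ, HasDerivAt
        (fun y => (Y' y - 2 * c * y) ^ 2 + (Y y - c * y ^ 2 + 2 * c) ^ 2 - 4 * c ^ 2) 0 y := by
      intro y
      have h := hYODE y
      have H :=
        ((((hY' y).sub ((hasDerivAt_id' y).const_mul (2 * c))).pow 2).add
          ((((hY y).sub ((hasDerivAt_pow 2 y).const_mul c)).add_const (2 * c)).pow 2)).sub_const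
          (4 * c ^ 2)
      convert H using 1
      case e'_4 => rfl
      case e'_5 => rfl
      case e'_8 => rfl
      push_cast
      simp only [Pi.add_apply, Pi.sub_apply, Pi.mul_apply, Pi.div_apply, Pi.neg_apply, Pi.pow_apply]
      linear_combination (4 * c * y - 2 * Y' y) * h
    exact ⟨(Y' 0 - 2 * c * 0) ^ 2 + (Y 0 - c * 0 ^ 2 + 2 * c) ^ 2 - 4 * c ^ 2,
      fun y => is_const_of_deriv_eq_zero
        (fun z => (H z).differentiableAt)
        (fun z => (H z).deriv) y 0⟩
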